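/- Let 𝒜 be an abelian length category and G : 𝒜ᵒᵖ × 𝒜 ⥤ Ab an additive bifunctor with values in abelian groups such that for every object X of 𝒜, every natural transformation G(X,-) ⟶ G(X,-) is of the form G(f,-) for some endomorphism f of X. If an additive functor F : 𝒜 ⥤ Ab is a direct summand (retract) of G(A,-) for some object A of 𝒜, then there exists a subobject B of A such that F is naturally isomorphic to G(B,-). -/

import Mathlib

/-!
The idempotent `e = π ≫ ι` on `G(A,-)` is `G(f,-)` for some `f : A ⟶ A`, hence `G(fⁿ,-) = e`
for all `n ≥ 1`.  By Fitting's lemma some power `g = fⁿ` has an image `I` on which it acts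
invertibly: writing `g = p ≫ m` with `p : A ⟶ I` epi and `m : I ⟶ A` mono, `h = m ≫ p` is an
automorphism of `I`.  Then `G(h,-)` is invertible and satisfies `G(h,-)³ = G(h,-)²`, so it is the
identity, and `G(I,-)` is a retract of `G(A,-)` splitting the same idempotent `e` as `F`.
Two splittings of one idempotent are isomorphic.
-/

open CategoryTheory CategoryTheory.Limits Opposite

universe w v u

namespace CategoryTheory

variable {C : Type u} [Category.{v} C]

def Retract.isoOfSameIdempotent {X Y Z : C} (h₁ : Retract X Y) (h₂ : Retract Z Y)
    (h : h₁.r ≫ h₁.i = h₂.r ≫ h₂.i) : X ≅ Z where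
  hom := h₁.i ≫ h₂.r
  inv := h₂.i ≫ h₁.r
  hom_inv_id := by
    rw [Category.assoc, ← Category.assoc h₂.r, ← h, Category.assoc, Retract.retract_assoc,
      Retract.retract]
  inv_hom_id := by
    rw [Category.assoc, ← Category.assoc h₁.r, h, Category.assoc, Retract.retract_assoc,
      Retract.retract]

lemma Functor.map_op_pow_succ {D : Type*} [Category D] (Φ : Cᵒᵖ ⥤ D) {A : C} (f : End A)
    (hf : Φ.map f.op ≫ Φ.map f.op = Φ.map f.op) (n : ℕ) :
    Φ.map (f ^ (n + 1)).op = Φ.map f.op := by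
  induction n with
  | zero => rw [pow_one]
  | succ n ih =>
    rw [pow_succ', End.mul_def, op_comp, Φ.map_comp, ih, hf]

lemma Functor.map_op_eq_id_of_isIso {D : Type*} [Category D] (Φ : Cᵒᵖ ⥤ D) {A I : C}
    (p : A ⟶ I) (m : I ⟶ A) [IsIso (m ≫ p)]
    (h : Φ.map (p ≫ m).op ≫ Φ.map (p ≫ m).op = Φ.map (p ≫ m).op) :
    Φ.map (m ≫ p).op = 𝟙 _ := by
  set u := Φ.map (m ≫ p).op
  have hu : u ≫ u ≫ u = u ≫ u ≫ 𝟙 _ := by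
    simp only [u, ← Φ.map_comp, ← op_comp, Category.assoc, Category.comp_id]
    simpa only [Φ.map_comp, op_comp, Category.assoc] using
      congrArg (fun t => Φ.map p.op ≫ t ≫ Φ.map m.op) h
  rwa [cancel_epi, cancel_epi] at hu

lemma exists_kernelSubobject_pow_eq [HasZeroMorphisms C] [HasKernels C] {A : C}
    [IsNoetherianObject A] (f : End A) :
    ∃ n, ∀ k, n ≤ k → kernelSubobject (f ^ n) = kernelSubobject (f ^ k) :=
  monotone_chain_condition_of_isNoetherianObject
    ⟨fun k => kernelSubobject (f ^ k), monotone_nat_of_le_succ fun k => by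
      rw [pow_succ', End.mul_def]; exact kernelSubobject_comp_le _ _⟩

lemma exists_imageSubobject_pow_eq [HasImages C] {A : C} [IsArtinianObject A] (f : End A) :
    ∃ n, ∀ k, n ≤ k → imageSubobject (f ^ n) = imageSubobject (f ^ k) :=
  antitone_chain_condition_of_isArtinianObject
    ⟨fun k => OrderDual.toDual (imageSubobject (f ^ k)), Antitone.dual_right <|
      antitone_nat_of_succ_le fun k => by
        rw [pow_succ, End.mul_def]; exact imageSubobject_comp_le _ _⟩

section Abelian

variable [Abelian C] {A : C}

lemma mono_comp_of_kernelSubobject_comp_le {I : C} {g : A ⟶ A} (p : A ⟶ I) (m : I ⟶ A)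
    [Epi p] [Mono m] (hg : p ≫ m = g) (hker : kernelSubobject (g ≫ g) ≤ kernelSubobject g) :
    Mono (m ≫ p) := by
  subst hg
  apply Abelian.mono_of_kernel_ι_eq_zero
  -- lift the kernel of `m ≫ p` along the epimorphism `p`
  set s := pullback.snd (kernel.ι (m ≫ p)) p
  have hs : s ≫ (p ≫ m) ≫ (p ≫ m) = 0 := by
    rw [Category.assoc, ← pullback.condition_assoc, ← Category.assoc m, kernel.condition_assoc,
      zero_comp, comp_zero]
  have hs' : s ≫ p = 0 := by
    rw [← cancel_mono m, Category.assoc, zero_comp, ← kernelSubobject_factors_iff]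
    exact Subobject.factors_of_le s hker ((kernelSubobject_factors_iff _ _).2 hs)
  exact zero_of_epi_comp (pullback.fst _ p) (by rw [pullback.condition, hs'])

lemma epi_imageSubobject_arrow_comp_factorThruImageSubobject (g : A ⟶ A)
    (him : imageSubobject g ≤ imageSubobject (g ≫ g)) :
    Epi ((imageSubobject g).arrow ≫ factorThruImageSubobject g) := by
  have hle : imageSubobject (g ≫ g) ≤ imageSubobject g := imageSubobject_comp_le g g
  have hcomp : factorThruImageSubobject g ≫ (imageSubobject g).arrow ≫
      factorThruImageSubobject g =
      factorThruImageSubobject (g ≫ g) ≫ (Subobject.isoOfEq _ _ (le_antisymm hle him)).hom := by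
    rw [← cancel_mono (imageSubobject g).arrow]
    simp only [Category.assoc, imageSubobject_arrow_comp, Subobject.isoOfEq_hom,
      Subobject.ofLE_arrow, imageSubobject_arrow_comp_assoc]
  have : Epi (factorThruImageSubobject g ≫ (imageSubobject g).arrow ≫
      factorThruImageSubobject g) := by
    rw [hcomp]; infer_instance
  exact epi_of_epi (factorThruImageSubobject g) _

lemma exists_isIso_imageSubobject_arrow_comp_factorThruImageSubobject_pow
    [IsNoetherianObject A] [IsArtinianObject A] (f : End A) :
    ∃ n, IsIso ((imageSubobject (f ^ (n + 1))).arrow ≫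
      factorThruImageSubobject (f ^ (n + 1))) := by
  obtain ⟨n₁, hker⟩ := exists_kernelSubobject_pow_eq f
  obtain ⟨n₂, him⟩ := exists_imageSubobject_pow_eq f
  refine ⟨n₁ + n₂, ?_⟩
  set g := f ^ (n₁ + n₂ + 1)
  have hgg : g ≫ g = f ^ ((n₁ + n₂ + 1) + (n₁ + n₂ + 1)) := (pow_add f _ _).symm
  have : Mono ((imageSubobject g).arrow ≫ factorThruImageSubobject g) := by
    refine mono_comp_of_kernelSubobject_comp_le _ _ (imageSubobject_arrow_comp g) ?_
    rw [hgg]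
    exact ((hker _ (by omega)).symm.trans (hker _ (by omega))).le
  have : Epi ((imageSubobject g).arrow ≫ factorThruImageSubobject g) := by
    refine epi_imageSubobject_arrow_comp_factorThruImageSubobject g ?_
    rw [hgg]
    exact ((him _ (by omega)).symm.trans (him _ (by omega))).le
  exact isIso_of_mono_of_epi _

end Abelian

end CategoryTheory

/-- Let `𝒜` be an abelian length category (every object is both noetherian and artinian)
and `G : 𝒜ᵒᵖ × 𝒜 ⥤ Ab` an additive bifunctor (given here in curried form, additive in each
variable) such that for every object `X` every natural transformation `G(X,-) ⟶ G(X,-)` is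
of the form `G(f,-)` for some endomorphism `f` of `X`.  If the additive functor `F` is a
direct summand (retract) of `G(A,-)` for an object `A`, then `F ≅ G(B,-)` for some
subobject `B` of `A`. -/
theorem direct_summand_of_bifunctor_fixed_argument_length_category
    {𝒜 : Type u} [Category.{v} 𝒜] [Abelian 𝒜]
    [∀ X : 𝒜, IsNoetherianObject X] [∀ X : 𝒜, IsArtinianObject X]
    (G : 𝒜ᵒᵖ ⥤ 𝒜 ⥤ AddCommGrpCat.{w}) [G.Additive] [∀ X : 𝒜ᵒᵖ, (G.obj X).Additive]
    (hsurj : ∀ (X : 𝒜) (η : G.obj (op X) ⟶ G.obj (op X)), ∃ f : X ⟶ X, G.map f.op = η)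
    (A : 𝒜) (F : 𝒜 ⥤ AddCommGrpCat.{w}) [F.Additive]
    (ι : F ⟶ G.obj (op A)) (π : G.obj (op A) ⟶ F) (hπι : ι ≫ π = 𝟙 F) :
    ∃ B : Subobject A, Nonempty (F ≅ G.obj (op (B : 𝒜))) := by
  let R : Retract F (G.obj (op A)) := ⟨ι, π, hπι⟩
  have he : (π ≫ ι) ≫ (π ≫ ι) = π ≫ ι := by rw [Category.assoc, reassoc_of% hπι]
  obtain ⟨f, hf⟩ : ∃ f : End A, G.map f.op = π ≫ ι := hsurj A (π ≫ ι)
  obtain ⟨n, hiso⟩ := exists_isIso_imageSubobject_arrow_comp_factorThruImageSubobject_pow f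
  set g : End A := f ^ (n + 1)
  set p := factorThruImageSubobject g
  set m := (imageSubobject g).arrow
  have hg : G.map (p ≫ m).op = π ≫ ι := by
    rw [imageSubobject_arrow_comp, Functor.map_op_pow_succ G f (hf ▸ he), hf]
  let S : Retract (G.obj (op (imageSubobject g : 𝒜))) (G.obj (op A)) :=
    ⟨G.map p.op, G.map m.op, by
      rw [← G.map_comp, ← op_comp, G.map_op_eq_id_of_isIso p m (hg ▸ he)]⟩
  exact ⟨imageSubobject g, ⟨R.isoOfSameIdempotent S (hg.symm.trans (G.map_comp m.op p.op))⟩⟩
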